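/- arXiv:1812.00984 — 4 statements merged into one kernel-verified Lean document; each statement's English description precedes it below -/
import Mathlib

section
/- Let M be an ε-differentially private mechanism on a space X, meaning for all x, x' ∈ X and measurable S, P(M(x) ∈ S) ≤ e^ε P(M(x') ∈ S). Let π be a prior on X and V = f(X) for a measurable function f. Then for any measurable sets A, A' ⊂ f(X) with π_V(A') > 0 and any output z with positive density, the posterior satisfies π_V(A | z) / π_V(A' | z) ≤ e^ε · π_V(A) / π_V(A'). -/
open MeasureTheory Real
open scoped ENNReal

/-- If the values of `h` differ by at most a factor `C`, then the averages of `h` over any two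
sets differ by at most the same factor, written here without division. -/
theorem setLIntegral_mul_measure_le_of_le_mul {α : Type*} [MeasurableSpace α] (μ : Measure α)
    {h : α → ℝ≥0∞} {C : ℝ≥0∞} (hC₀ : C ≠ 0) (hC : C ≠ ∞) (hh : ∀ x y, h x ≤ C * h y)
    (s t : Set α) :
    (∫⁻ x in s, h x ∂μ) * μ t ≤ C * μ s * ∫⁻ x in t, h x ∂μ := by
  set m := ⨅ y, h y
  have h_le : ∀ x, h x ≤ C * m := fun x => by
    rw [ENNReal.mul_iInf_of_ne hC₀ hC]
    exact le_iInf (hh x)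
  have upper : ∫⁻ x in s, h x ∂μ ≤ C * m * μ s :=
    (lintegral_mono h_le).trans_eq (setLIntegral_const s _)
  have lower : m * μ t ≤ ∫⁻ x in t, h x ∂μ :=
    (setLIntegral_const t m).symm.trans_le (lintegral_mono fun y => iInf_le h y)
  calc (∫⁻ x in s, h x ∂μ) * μ t ≤ C * m * μ s * μ t := by gcongr
    _ = C * μ s * (m * μ t) := by ring
    _ ≤ C * μ s * ∫⁻ x in t, h x ∂μ := by gcongr

theorem ENNReal.div_le_mul_div_of_mul_le {a b c d C : ℝ≥0∞} (hd₀ : d ≠ 0) (hd : d ≠ ∞)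
    (h : a * d ≤ C * c * b) : a / b ≤ C * (c / d) := by
  refine ENNReal.div_le_of_le_mul ?_
  calc a ≤ C * c * b / d := (ENNReal.le_div_iff_mul_le (Or.inl hd₀) (Or.inl hd)).2 h
    _ = C * (c / d) * b := by simp only [div_eq_mul_inv]; ring

/-- The density `g x z` of `M(x)` at the output `z` models the mechanism, and ε-DP is the
pointwise likelihood-ratio bound `g x z ≤ e^ε g x' z`. By Bayes' rule
`π_V(A | z) = (∫_{f⁻¹ A} g x z dπ) / (∫ g x z dπ)`, so the ratio of posteriors of `A` and `A'` is
the displayed ratio of restricted integrals. -/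
theorem posterior_ratio_bound_of_DP_general
    {X Z V : Type*} [MeasurableSpace X] [MeasurableSpace Z] [MeasurableSpace V]
    (pri : Measure X) [IsProbabilityMeasure pri]
    (g : X → Z → ℝ≥0∞) (ε : ℝ)
    (hDP : ∀ x x' : X, ∀ z : Z, g x z ≤ ENNReal.ofReal (exp ε) * g x' z)
    (f : X → V)
    (A A' : Set V)
    (hA'pos : 0 < pri (f ⁻¹' A'))
    (z : Z) :
    (∫⁻ x in f ⁻¹' A, g x z ∂pri) / (∫⁻ x in f ⁻¹' A', g x z ∂pri)
      ≤ ENNReal.ofReal (exp ε) * (pri (f ⁻¹' A) / pri (f ⁻¹' A')) := by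
  have hC₀ : ENNReal.ofReal (exp ε) ≠ 0 := ENNReal.ofReal_ne_zero_iff.2 (exp_pos ε)
  exact ENNReal.div_le_mul_div_of_mul_le hA'pos.ne' (measure_ne_top pri _)
    (setLIntegral_mul_measure_le_of_le_mul pri hC₀ ENNReal.ofReal_ne_top
      (fun x y => hDP x y z) _ _)

/-- Bayes-rule posterior ratio bound under ε-differential privacy.
The mechanism `M` is represented by its density `g x z` (the density of `M(x)` at output `z`
with respect to a reference measure on `Z`); ε-DP is the pointwise likelihood-ratio bound
`g x z ≤ e^ε g x' z`.  The posterior of `V = f(X)` given output `z` is, by Bayes' rule,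
`π_V(A | z) = (∫_{f⁻¹ A} g x z dπ) / (∫ g x z dπ)`, so the ratio of posteriors of `A` and
`A'` equals the displayed ratio of restricted integrals. -/
theorem posterior_ratio_bound_of_DP
    {X Z V : Type*} [MeasurableSpace X] [MeasurableSpace Z] [MeasurableSpace V]
    (pri : Measure X) [IsProbabilityMeasure pri]
    (g : X → Z → ℝ≥0∞) (ε : ℝ)
    (hDP : ∀ x x' : X, ∀ z : Z, g x z ≤ ENNReal.ofReal (exp ε) * g x' z)
    (f : X → V) (hf : Measurable f)
    (A A' : Set V) (hA : MeasurableSet A) (hA' : MeasurableSet A')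
    (hA'pos : 0 < pri (f ⁻¹' A'))
    (z : Z) (hz : 0 < ∫⁻ x, g x z ∂pri) :
    (∫⁻ x in f ⁻¹' A, g x z ∂pri) / (∫⁻ x in f ⁻¹' A', g x z ∂pri)
      ≤ ENNReal.ofReal (exp ε) * (pri (f ⁻¹' A) / pri (f ⁻¹' A')) :=
  posterior_ratio_bound_of_DP_general pri g ε hDP f A A' hA'pos z
end

section
/- Suppose the prior π₀ on X satisfies P(L(f(X), v₀) ≤ α) ≤ p(α) for every fixed point v₀, where L is a loss function and f a target function. If M is an ε-differentially private mechanism, then for every estimator v̂ and every output z, P(L(f(X), v̂(z)) ≤ α | M(X) = z) ≤ e^ε · p(α). -/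
open MeasureTheory Real
open scoped ENNReal

/-!
Under ε-local differential privacy the likelihood `g x z` of an output varies by at most a
factor `e^ε` in `x`, so it is at most `e^ε` times its prior average `∫ g x' z dπ(x')`.
Hence the posterior mass of any set of inputs is at most `e^ε` times its prior mass; applied
to the set of inputs whose target lies within loss `α` of the estimate `vhat z`, whose prior
mass is at most `p` whatever the estimate, this gives the bound.
-/

section LikelihoodRatio

variable {X : Type*} [MeasurableSpace X] (μ : Measure X) [IsProbabilityMeasure μ]
  {g : X → ℝ≥0∞} {c : ℝ≥0∞}

theorem le_mul_lintegral_of_forall_le_mul (hc : c ≠ ∞) (hg : ∀ x x', g x ≤ c * g x') (x : X) :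
    g x ≤ c * ∫⁻ x', g x' ∂μ :=
  calc g x = ∫⁻ _, g x ∂μ := by rw [lintegral_const, measure_univ, mul_one]
    _ ≤ ∫⁻ x', c * g x' ∂μ := lintegral_mono (hg x)
    _ = c * ∫⁻ x', g x' ∂μ := lintegral_const_mul' c g hc

theorem setLIntegral_le_mul_lintegral_mul_measure (hc : c ≠ ∞) (hg : ∀ x x', g x ≤ c * g x')
    (s : Set X) : ∫⁻ x in s, g x ∂μ ≤ c * (∫⁻ x, g x ∂μ) * μ s :=
  calc ∫⁻ x in s, g x ∂μ ≤ ∫⁻ _ in s, c * ∫⁻ x', g x' ∂μ ∂μ :=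
        lintegral_mono (le_mul_lintegral_of_forall_le_mul μ hc hg)
    _ = c * (∫⁻ x, g x ∂μ) * μ s := setLIntegral_const s _

theorem setLIntegral_div_lintegral_le_mul_measure (hc : c ≠ ∞) (hg : ∀ x x', g x ≤ c * g x')
    (s : Set X) : (∫⁻ x in s, g x ∂μ) / (∫⁻ x, g x ∂μ) ≤ c * μ s :=
  ENNReal.div_le_of_le_mul <| by
    rw [mul_right_comm]
    exact setLIntegral_le_mul_lintegral_mul_measure μ hc hg s

end LikelihoodRatio

theorem reconstruction_protection_of_DP_general
    {X Z : Type*} [MeasurableSpace X] {k : ℕ}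
    (pri : Measure X) [IsProbabilityMeasure pri]
    (g : X → Z → ℝ≥0∞) (ε : ℝ)
    (hDP : ∀ x x' : X, ∀ z : Z, g x z ≤ ENNReal.ofReal (exp ε) * g x' z)
    (f : X → EuclideanSpace ℝ (Fin k))
    (L : EuclideanSpace ℝ (Fin k) → EuclideanSpace ℝ (Fin k) → ℝ)
    (α : ℝ) (p : ℝ≥0∞)
    (hprior : ∀ v₀ : EuclideanSpace ℝ (Fin k), pri {x | L (f x) v₀ ≤ α} ≤ p)
    (vhat : Z → EuclideanSpace ℝ (Fin k)) (z : Z) :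
    (∫⁻ x in {x | L (f x) (vhat z) ≤ α}, g x z ∂pri) / (∫⁻ x, g x z ∂pri)
      ≤ ENNReal.ofReal (exp ε) * p :=
  (setLIntegral_div_lintegral_le_mul_measure pri ENNReal.ofReal_ne_top (fun x x' => hDP x x' z)
    _).trans (mul_le_mul_right (hprior (vhat z)) _)

/-- preservation of difficulty of reconstruction under an ε-DP mechanism.
The mechanism is represented by its density `g x z` w.r.t. a reference measure on `Z`;
ε-local differential privacy is the pointwise likelihood-ratio bound.  The conditional
probability `P(L(f(X), vhat(z)) ≤ α | M(X) = z)` is, by Bayes' rule,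
`(∫_{{x : L(f x, vhat z) ≤ α}} g x z dπ) / (∫ g x z dπ)`. -/
theorem reconstruction_protection_of_DP
    {X Z : Type*} [MeasurableSpace X] [MeasurableSpace Z] {k : ℕ}
    (pri : Measure X) [IsProbabilityMeasure pri]
    (g : X → Z → ℝ≥0∞) (ε : ℝ)
    (hDP : ∀ x x' : X, ∀ z : Z, g x z ≤ ENNReal.ofReal (exp ε) * g x' z)
    (f : X → EuclideanSpace ℝ (Fin k))
    (L : EuclideanSpace ℝ (Fin k) → EuclideanSpace ℝ (Fin k) → ℝ)
    (α : ℝ) (p : ℝ≥0∞)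
    (hprior : ∀ v₀ : EuclideanSpace ℝ (Fin k), pri {x | L (f x) v₀ ≤ α} ≤ p)
    (vhat : Z → EuclideanSpace ℝ (Fin k)) (z : Z)
    (hz : 0 < ∫⁻ x, g x z ∂pri) (hz' : (∫⁻ x, g x z ∂pri) ≠ ⊤) :
    (∫⁻ x in {x | L (f x) (vhat z) ≤ α}, g x z ∂pri) / (∫⁻ x, g x z ∂pri)
      ≤ ENNReal.ofReal (exp ε) * p :=
  reconstruction_protection_of_DP_general pri g ε hDP f L α p hprior vhat z
end

section
/- Let U be uniform on the unit sphere S^{d-1} in ℝ^d and 0 ≤ a ≤ 1. Then P(⟨U, u⟩ > a) ≥ ((1-a)/(2d)) (1 - a²)^{(d-1)/2} for any fixed u ∈ S^{d-1}. -/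
open MeasureTheory Real
open scoped ENNReal

/-- The uniform probability measure on the unit sphere `S^{d-1} ⊂ ℝ^d`. -/
noncomputable def uniformSphere (d : ℕ) :
    Measure (Metric.sphere (0 : EuclideanSpace ℝ (Fin d)) 1) :=
  ((volume : Measure (EuclideanSpace ℝ (Fin d))).toSphere Set.univ)⁻¹ •
    (volume : Measure (EuclideanSpace ℝ (Fin d))).toSphere

/-!
The uniform measure of a set `S` of the sphere is the volume of the cone `(0, 1) • S` divided by
the volume of the unit ball. The cone over the cap `{⟪x, u⟫ > a}` contains the solid cap
`{‖y‖ < 1, ⟪y, u⟫ > a}`, whose volume, after a reflection taking `u` to `e₀` and slicing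
orthogonally to `e₀`, is `V_{d-1} ∫_a^1 (1 - t²)^{(d-1)/2} dt`; the same slicing bounds the
ball by `2 V_{d-1}`. On `[a, 1]` the concave function `√(1 - t²)` lies above its chord to
`(1, 0)`, so the integral is at least `(1 - a²)^{(d-1)/2} (1 - a) / d`.
-/

open Set Metric
open scoped Pointwise RealInnerProductSpace

lemma uniformSphere_apply {d : ℕ} (hd : d ≠ 0)
    {s : Set (sphere (0 : EuclideanSpace ℝ (Fin d)) 1)} (hs : MeasurableSet s) :
    uniformSphere d s
      = volume (Ioo (0 : ℝ) 1 • (Subtype.val '' s))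
          / volume (ball (0 : EuclideanSpace ℝ (Fin d)) 1) := by
  rw [uniformSphere, Measure.smul_apply, smul_eq_mul, Measure.toSphere_apply' _ hs,
    Measure.toSphere_apply_univ, finrank_euclideanSpace_fin,
    ENNReal.mul_inv (by simp [hd]) (by simp), ENNReal.div_eq_inv_mul, mul_mul_mul_comm,
    ENNReal.inv_mul_cancel (by simp [hd]) (by simp), one_mul]

section Cap

variable {E : Type*} [NormedAddCommGroup E] [InnerProductSpace ℝ E]

lemma setOf_norm_lt_one_and_lt_inner_subset {a : ℝ} (ha : 0 ≤ a) (u : E) :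
    {y : E | ‖y‖ < 1 ∧ a < ⟪y, u⟫}
      ⊆ Ioo (0 : ℝ) 1 • ((↑) '' {x : sphere (0 : E) 1 | a < ⟪(x : E), u⟫}) := by
  rintro y ⟨hy1, hyu⟩
  have hy0 : y ≠ 0 := by rintro rfl; simp at hyu; linarith
  have hny : 0 < ‖y‖ := norm_pos_iff.2 hy0
  refine ⟨‖y‖, ⟨hny, hy1⟩, ‖y‖⁻¹ • y, ⟨⟨_, ?_⟩, ?_, rfl⟩, smul_inv_smul₀ hny.ne' y⟩
  · simp [norm_smul, hny.ne']
  · calc a < ⟪y, u⟫ := hyu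
      _ ≤ ‖y‖⁻¹ * ⟪y, u⟫ :=
          le_mul_of_one_le_left (ha.trans hyu.le) (one_le_inv₀ hny |>.2 hy1.le)
      _ = _ := (real_inner_smul_left _ _ _).symm

variable [FiniteDimensional ℝ E] [MeasurableSpace E] [BorelSpace E]

lemma volume_setOf_norm_lt_one_and_lt_inner_congr {u v : E} (h : ‖u‖ = ‖v‖) (a : ℝ) :
    volume {y : E | ‖y‖ < 1 ∧ a < ⟪y, u⟫} = volume {y : E | ‖y‖ < 1 ∧ a < ⟪y, v⟫} := by
  obtain ⟨R, rfl⟩ : ∃ R : E ≃ₗᵢ[ℝ] E, R u = v := ⟨_, Submodule.reflection_sub h⟩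
  have hR : {y : E | ‖y‖ < 1 ∧ a < ⟪y, u⟫} = R ⁻¹' {y : E | ‖y‖ < 1 ∧ a < ⟪y, R u⟫} := by
    ext y
    simp only [mem_ofPred_eq, mem_preimage, LinearIsometryEquiv.norm_map,
      LinearIsometryEquiv.inner_map_map]
  have hopen : IsOpen {y : E | ‖y‖ < 1 ∧ a < ⟪y, R u⟫} :=
    (isOpen_lt continuous_norm continuous_const).inter
      (isOpen_lt continuous_const (by fun_prop : Continuous fun y : E => ⟪y, R u⟫))
  rw [hR, R.measurePreserving.measure_preimage hopen.nullMeasurableSet]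

end Cap

lemma volume_setOf_sum_sq_lt {ι : Type*} [Fintype ι] {s : ℝ} (hs : 0 < s) :
    volume {y : ι → ℝ | ∑ i, y i ^ 2 < s}
      = ENNReal.ofReal (√s ^ Fintype.card ι) * volume (ball (0 : EuclideanSpace ℝ ι) 1) := by
  have hball : {y : ι → ℝ | ∑ i, y i ^ 2 < s} = WithLp.toLp 2 ⁻¹' ball 0 √s := by
    ext y
    simp [EuclideanSpace.ball_zero_eq _ (sqrt_nonneg s), sq_sqrt hs.le]
  rw [hball, (PiLp.volume_preserving_toLp ι).measure_preimage measurableSet_ball.nullMeasurableSet,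
    Measure.addHaar_ball_of_pos _ _ (sqrt_pos.2 hs), finrank_euclideanSpace]

lemma volume_setOf_norm_lt_one_and_lt_apply_zero (m : ℕ) {a : ℝ} (ha : -1 ≤ a) :
    volume {x : EuclideanSpace ℝ (Fin (m + 1)) | ‖x‖ < 1 ∧ a < x 0}
      = (∫⁻ t in Ioo a 1, ENNReal.ofReal (√(1 - t ^ 2) ^ m))
          * volume (ball (0 : EuclideanSpace ℝ (Fin m)) 1) := by
  set T : Set (ℝ × (Fin m → ℝ)) := {p | p.1 ^ 2 + ∑ i, p.2 i ^ 2 < 1 ∧ a < p.1}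
  have hT : MeasurableSet T := by
    refine IsOpen.measurableSet (IsOpen.inter ?_ (isOpen_lt continuous_const continuous_fst))
    exact isOpen_lt (by fun_prop : Continuous fun p : ℝ × (Fin m → ℝ) => p.1 ^ 2 + ∑ i, p.2 i ^ 2)
      continuous_const
  have hpre : {x : EuclideanSpace ℝ (Fin (m + 1)) | ‖x‖ < 1 ∧ a < x 0}
      = (MeasurableEquiv.piFinSuccAbove (fun _ => ℝ) 0 ∘ WithLp.ofLp) ⁻¹' T := by
    ext x
    simp [T, EuclideanSpace.norm_eq, Fin.sum_univ_succ, sqrt_lt' one_pos, Fin.tail]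
  have hslice (t : ℝ) : volume (Prod.mk t ⁻¹' T)
      = (Ioo a 1).indicator (fun t => ENNReal.ofReal (√(1 - t ^ 2) ^ m)
          * volume (ball (0 : EuclideanSpace ℝ (Fin m)) 1)) t := by
    by_cases ht : t ∈ Ioo a 1
    · have : Prod.mk t ⁻¹' T = {y : Fin m → ℝ | ∑ i, y i ^ 2 < 1 - t ^ 2} := by
        ext y
        simp only [T, mem_preimage, mem_ofPred_eq, and_iff_left ht.1]
        constructor <;> intro h <;> linarith
      rw [indicator_of_mem ht, this, volume_setOf_sum_sq_lt (by nlinarith [ht.1, ht.2]),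
        Fintype.card_fin]
    · have : Prod.mk t ⁻¹' T = ∅ := by
        refine eq_empty_of_forall_notMem fun y ⟨hy, hat⟩ => ht ⟨hat, ?_⟩
        nlinarith [Finset.sum_nonneg fun i (_ : i ∈ Finset.univ) => sq_nonneg (y i)]
      rw [indicator_of_notMem ht, this, measure_empty]
  rw [hpre, ((volume_preserving_piFinSuccAbove (fun _ : Fin (m + 1) => ℝ) 0).comp
      (PiLp.volume_preserving_ofLp _)).measure_preimage hT.nullMeasurableSet,
    Measure.volume_eq_prod, Measure.prod_apply hT]
  simp only [hslice]
  rw [lintegral_indicator measurableSet_Ioo, lintegral_mul_const _ (by fun_prop)]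

lemma chord_le_sqrt_one_sub_sq {a t : ℝ} (ha : -1 ≤ a) (hat : a ≤ t) (ht : t ≤ 1) :
    √(1 - a ^ 2) * ((1 - t) / (1 - a)) ≤ √(1 - t ^ 2) := by
  rcases (hat.trans ht).eq_or_lt with rfl | ha1
  · simp -- at `a = 1` the chord is `0`, since `x / 0 = 0`
  rw [mul_div_assoc', div_le_iff₀ (by linarith)]
  calc √(1 - a ^ 2) * (1 - t) = √((1 - a ^ 2) * (1 - t) ^ 2) := by
        rw [sqrt_mul' _ (sq_nonneg _), sqrt_sq (by linarith)]
    _ ≤ √((1 - t ^ 2) * (1 - a) ^ 2) := by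
        refine sqrt_le_sqrt ?_
        nlinarith [mul_nonneg (mul_nonneg (sub_nonneg.2 ht) (sub_nonneg.2 ha1.le))
          (sub_nonneg.2 hat)]
    _ = √(1 - t ^ 2) * (1 - a) := by
        rw [sqrt_mul' _ (sq_nonneg _), sqrt_sq (by linarith)]

lemma integral_chord_pow (m : ℕ) (a : ℝ) :
    ∫ t in a..1, (√(1 - a ^ 2) * ((1 - t) / (1 - a))) ^ m
      = √(1 - a ^ 2) ^ m * (1 - a) / (m + 1) := by
  rcases eq_or_ne a 1 with rfl | ha1
  · simp
  have h : ∫ t in a..1, (1 - t) ^ m = (1 - a) ^ (m + 1) / (m + 1) := by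
    simp [intervalIntegral.integral_comp_sub_left (fun s => s ^ m), integral_pow]
  simp_rw [mul_pow, div_pow, intervalIntegral.integral_const_mul, intervalIntegral.integral_div, h]
  have : 1 - a ≠ 0 := sub_ne_zero.2 (Ne.symm ha1)
  field_simp
  ring

lemma mul_div_le_integral_sqrt_one_sub_sq_pow (m : ℕ) {a : ℝ} (ha0 : -1 ≤ a) (ha1 : a ≤ 1) :
    √(1 - a ^ 2) ^ m * (1 - a) / (m + 1) ≤ ∫ t in a..1, √(1 - t ^ 2) ^ m := by
  rw [← integral_chord_pow]
  refine intervalIntegral.integral_mono_on ha1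
    ((by fun_prop : Continuous _).intervalIntegrable _ _)
    ((by fun_prop : Continuous _).intervalIntegrable _ _) fun t ht => ?_
  have hchord_nonneg : 0 ≤ √(1 - a ^ 2) * ((1 - t) / (1 - a)) :=
    mul_nonneg (sqrt_nonneg _) (div_nonneg (by linarith [ht.2]) (by linarith))
  exact pow_le_pow_left₀ hchord_nonneg (chord_le_sqrt_one_sub_sq ha0 ht.1 ht.2) m

lemma ofReal_mul_volume_ball_le_volume_setOf_lt_apply_zero (m : ℕ) {a : ℝ} (ha0 : -1 ≤ a)
    (ha1 : a ≤ 1) :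
    ENNReal.ofReal (√(1 - a ^ 2) ^ m * (1 - a) / (2 * (m + 1)))
        * volume (ball (0 : EuclideanSpace ℝ (Fin (m + 1))) 1)
      ≤ volume {x : EuclideanSpace ℝ (Fin (m + 1)) | ‖x‖ < 1 ∧ a < x 0} := by
  have hball : ball (0 : EuclideanSpace ℝ (Fin (m + 1))) 1 = {x | ‖x‖ < 1 ∧ -1 < x 0} := by
    ext x
    simp only [mem_ball_zero_iff, mem_ofPred_eq, iff_self_and]
    intro hx
    have := (PiLp.norm_apply_le x 0).trans_lt hx
    rw [Real.norm_eq_abs] at this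
    linarith [neg_abs_le (x 0)]
  have hfull : ∫⁻ t in Ioo (-1 : ℝ) 1, ENNReal.ofReal (√(1 - t ^ 2) ^ m) ≤ 2 :=
    calc _ ≤ ∫⁻ _ in Ioo (-1 : ℝ) 1, 1 := lintegral_mono fun t => ENNReal.ofReal_le_one.2 <|
            pow_le_one₀ (sqrt_nonneg _) (sqrt_le_one.2 (by nlinarith [sq_nonneg t]))
      _ = 2 := by norm_num [Real.volume_Ioo]
  have hcap : ENNReal.ofReal (√(1 - a ^ 2) ^ m * (1 - a) / (m + 1))
      ≤ ∫⁻ t in Ioo a 1, ENNReal.ofReal (√(1 - t ^ 2) ^ m) := by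
    rw [← ofReal_integral_eq_lintegral_ofReal
      ((by fun_prop : Continuous fun t : ℝ => √(1 - t ^ 2) ^ m).integrableOn_Icc.mono_set
        Ioo_subset_Icc_self) (.of_forall fun t => by positivity),
      ← integral_Ioc_eq_integral_Ioo, ← intervalIntegral.integral_of_le ha1]
    exact ENNReal.ofReal_le_ofReal (mul_div_le_integral_sqrt_one_sub_sq_pow m ha0 ha1)
  rw [hball, volume_setOf_norm_lt_one_and_lt_apply_zero m le_rfl,
    volume_setOf_norm_lt_one_and_lt_apply_zero m ha0, ← mul_assoc]
  gcongr
  calc _ ≤ ENNReal.ofReal (√(1 - a ^ 2) ^ m * (1 - a) / (2 * (m + 1))) * 2 := by gcongr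
    _ = ENNReal.ofReal (√(1 - a ^ 2) ^ m * (1 - a) / (m + 1)) := by
        have := sqrt_nonneg (1 - a ^ 2)
        rw [← ENNReal.ofReal_ofNat 2, ← ENNReal.ofReal_mul (by positivity)]
        congr 1
        field_simp
    _ ≤ _ := hcap

/-- spherical-cap probability lower bound
`P(⟨U,u⟩ > a) ≥ ((1-a)/(2d)) (1-a²)^{(d-1)/2}` for `0 ≤ a ≤ 1`. -/
theorem sphere_cap_prob_lower (d : ℕ)
    (u : Metric.sphere (0 : EuclideanSpace ℝ (Fin d)) 1)
    (a : ℝ) (ha0 : 0 ≤ a) (ha1 : a ≤ 1) :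
    ENNReal.ofReal ((1 - a) / (2 * d) * (1 - a ^ 2) ^ (((d : ℝ) - 1) / 2))
      ≤ uniformSphere d
          {x | a < (inner ℝ (x : EuclideanSpace ℝ (Fin d)) (u : EuclideanSpace ℝ (Fin d)) : ℝ)} := by
  obtain ⟨m, rfl⟩ : ∃ m, d = m + 1 := Nat.exists_eq_succ_of_ne_zero <| by
    rintro rfl
    exact ne_zero_of_mem_unit_sphere u (Subsingleton.elim _ _)
  have hS : MeasurableSet {x : sphere (0 : EuclideanSpace ℝ (Fin (m + 1))) 1 |
      a < ⟪(x : EuclideanSpace ℝ (Fin (m + 1))), u⟫} :=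
    measurableSet_lt measurable_const (by fun_prop)
  have hconst : (1 - a) / (2 * ((m + 1 : ℕ) : ℝ)) * (1 - a ^ 2) ^ ((((m + 1 : ℕ) : ℝ) - 1) / 2)
      = √(1 - a ^ 2) ^ m * (1 - a) / (2 * (m + 1)) := by
    rw [sqrt_eq_rpow, ← rpow_mul_natCast (by nlinarith)]
    push_cast
    ring_nf
  rw [uniformSphere_apply m.succ_ne_zero hS,
    ENNReal.le_div_iff_mul_le (.inl (measure_ball_pos _ _ one_pos).ne')
      (.inl measure_ball_lt_top.ne), hconst]
  calc _ ≤ volume {x : EuclideanSpace ℝ (Fin (m + 1)) | ‖x‖ < 1 ∧ a < x 0} :=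
        ofReal_mul_volume_ball_le_volume_setOf_lt_apply_zero m (by linarith) ha1
    _ = volume {x : EuclideanSpace ℝ (Fin (m + 1)) | ‖x‖ < 1 ∧ a < ⟪x, u⟫} := by
        rw [volume_setOf_norm_lt_one_and_lt_inner_congr (v := EuclideanSpace.single 0 1)
          (by simp) a]
        simp [EuclideanSpace.inner_single_right]
    _ ≤ _ := measure_mono (setOf_norm_lt_one_and_lt_inner_subset ha0 _)
end

section
/- Let X ∈ {0,1}^d have independent coordinates with P(X_j = 1) = min{m/j, 1}, γ ≥ 2, and let v ∈ {0,1}^d satisfy v^T 1 ≥ γm. Define precision(X, v) = v^T X / v^T 1. Then P(precision(X, v) ≥ p) ≤ exp(−min{ (pγ − 1 − log γ)₊² m / (4 log γ), (3/4)(pγ − 1 − log γ)₊ m }). -/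
/-!
Chernoff's method. The moment generating function of a Bernoulli variable of mean `q` obeys the
Bennett-type bound `1 - q + q e^λ ≤ exp (λ q + φ(λ) q (1 - q))`, where `φ(λ) = e^λ - 1 - λ`.
Because the Zipf probabilities decrease, the resulting exponent is largest when the support of `v`
is the first `N = vᵀ1 ≥ γ m` coordinates; there the means sum to at most `m (1 + log (N / m))`
and the variances to at most `m log (N / m)`. With `t = pγ - 1 - log γ` this leaves the exponent
`-m (λ t - φ(λ) log γ)`, and `λ = min (t / (2 log γ)) (5/4)`, together with `φ(λ) ≤ 4λ²/5` on
`[0, 5/4]`, produces the two regimes of the bound.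
-/

open MeasureTheory Real
open scoped ENNReal NNReal

/-- The Zipfian product measure on `{0,1}^d`: coordinates are independent with
`P(X_j = 1) = min{m/j, 1}` (indexing coordinates by `j = 1,…,d`). -/
noncomputable def zipfMeasure (d m : ℕ) : Measure (Fin d → Bool) :=
  Measure.pi fun j =>
    (PMF.bernoulli (min ((m : ℝ≥0) / ((j : ℕ) + 1)) 1) (min_le_right _ _)).toMeasure

open Finset ProbabilityTheory

lemma exp_neg_le_one_sub_add_sq_div_two {u : ℝ} (hu : 0 ≤ u) : exp (-u) ≤ 1 - u + u ^ 2 / 2 := by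
  have hcubic : 1 + u + u ^ 2 / 2 + u ^ 3 / 6 ≤ exp u := by
    simpa [sum_range_succ, Nat.factorial] using sum_le_exp_of_nonneg hu 4
  -- `(1 - u + u²/2)(1 + u + u²/2 + u³/6) = 1 + u³/6 + u⁴/12 + u⁵/12`
  have : 1 ≤ (1 - u + u ^ 2 / 2) * exp u := by
    nlinarith [mul_le_mul_of_nonneg_left hcubic (by nlinarith : (0 : ℝ) ≤ 1 - u + u ^ 2 / 2),
      pow_nonneg hu 3, pow_nonneg hu 4, pow_nonneg hu 5]
  rw [exp_neg, inv_le_iff_one_le_mul₀ (exp_pos u)]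
  linarith

lemma hasSum_exp_sub_one_sub (x : ℝ) :
    HasSum (fun n : ℕ => x ^ (n + 2) / (n + 2).factorial) (exp x - 1 - x) := by
  have := (hasSum_nat_add_iff' 2).mpr (NormedSpace.expSeries_div_hasSum_exp x)
  simpa [sum_range_succ, ← exp_eq_exp_ℝ, sub_sub] using this

lemma exp_mul_sub_one_sub_le {x s : ℝ} (hx : 0 ≤ x) (hs0 : 0 ≤ s) (hs1 : s ≤ 1) :
    exp (s * x) - 1 - s * x ≤ s ^ 2 * (exp x - 1 - x) := by
  refine hasSum_le (fun n => ?_) (hasSum_exp_sub_one_sub (s * x))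
    ((hasSum_exp_sub_one_sub x).mul_left (s ^ 2))
  rw [mul_pow, mul_div_assoc]
  exact mul_le_mul_of_nonneg_right (pow_le_pow_of_le_one hs0 hs1 (by omega)) (by positivity)

lemma exp_five_div_four_le : exp (5 / 4 : ℝ) ≤ 7 / 2 := by
  have h : exp (5 / 4 : ℝ) ^ 4 ≤ (7 / 2) ^ 4 := calc
    exp (5 / 4 : ℝ) ^ 4 = exp 1 ^ 5 := by rw [← exp_nat_mul, ← exp_nat_mul]; norm_num
    _ ≤ 2.7182818286 ^ 5 := by gcongr; exact exp_one_lt_d9.le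
    _ ≤ (7 / 2) ^ 4 := by norm_num
  exact le_of_pow_le_pow_left₀ (by norm_num) (by norm_num) h

lemma exp_sub_one_sub_le_of_le_five_div_four {x : ℝ} (hx0 : 0 ≤ x) (hx : x ≤ 5 / 4) :
    exp x - 1 - x ≤ 4 / 5 * x ^ 2 := by
  have := exp_mul_sub_one_sub_le (x := 5 / 4) (s := 4 / 5 * x) (by norm_num) (by positivity)
    (by linarith)
  have := exp_five_div_four_le
  rw [show 4 / 5 * x * (5 / 4) = x by ring] at *
  nlinarith [sq_nonneg x]

lemma one_sub_add_mul_exp_le {q l : ℝ} (hq0 : 0 ≤ q) (hq1 : q ≤ 1) (hl : 0 ≤ l) :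
    1 - q + q * exp l ≤ exp (l * q + (exp l - 1 - l) * (q * (1 - q))) := by
  set φ := exp l - 1 - l
  have hneg : exp (-(l * q)) ≤ 1 - l * q + q ^ 2 * φ := by
    have := exp_neg_le_one_sub_add_sq_div_two (mul_nonneg hl hq0)
    have := quadratic_le_exp_of_nonneg hl
    nlinarith [sq_nonneg q]
  have hpos : exp ((1 - q) * l) ≤ 1 + (1 - q) * l + (1 - q) ^ 2 * φ := by
    linarith [exp_mul_sub_one_sub_le hl (sub_nonneg.2 hq1) (by linarith : 1 - q ≤ 1)]
  -- centring at the mean `q`, the linear terms cancel and the quadratic ones sum to the variance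
  calc 1 - q + q * exp l
      = exp (l * q) * ((1 - q) * exp (-(l * q)) + q * exp ((1 - q) * l)) := by
        have : l * q + (1 - q) * l = l := by ring
        rw [mul_add, mul_left_comm, ← exp_add, add_neg_cancel, exp_zero, mul_left_comm, ← exp_add,
          this]
        ring
    _ ≤ exp (l * q) * (1 + φ * (q * (1 - q))) := by
        refine mul_le_mul_of_nonneg_left ?_ (exp_pos _).le
        nlinarith [mul_le_mul_of_nonneg_left hneg (sub_nonneg.2 hq1),
          mul_le_mul_of_nonneg_left hpos hq0]
    _ ≤ exp (l * q) * exp (φ * (q * (1 - q))) := by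
        gcongr; linarith [add_one_le_exp (φ * (q * (1 - q)))]
    _ = exp (l * q + φ * (q * (1 - q))) := (exp_add _ _).symm

lemma exists_chernoff_parameter {L t : ℝ} (hL : 1 / 2 ≤ L) (ht : 0 < t) :
    ∃ l : ℝ, 0 ≤ l ∧ exp l - 1 - l ≤ l ∧ exp l - 1 - l ≤ l * t ∧
      min (t ^ 2 / (4 * L)) (3 / 4 * t) ≤ l * t - (exp l - 1 - l) * L := by
  rcases le_or_gt (t / (2 * L)) (5 / 4) with h | h
  · have hl : 0 ≤ t / (2 * L) := by positivity
    have hφ := exp_sub_one_sub_le_of_le_five_div_four hl h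
    have ht : t = 2 * L * (t / (2 * L)) := by field_simp
    set l := t / (2 * L)
    refine ⟨l, hl, by nlinarith, by nlinarith, (min_le_left _ _).trans ?_⟩
    rw [div_le_iff₀ (by positivity), ht]
    nlinarith [mul_le_mul_of_nonneg_left hφ (by linarith : (0 : ℝ) ≤ L), sq_nonneg l]
  · rw [lt_div_iff₀ (by positivity)] at h
    have hφ : exp (5 / 4 : ℝ) - 1 - 5 / 4 ≤ 5 / 4 := by linarith [exp_five_div_four_le]
    refine ⟨5 / 4, by norm_num, hφ, by nlinarith, (min_le_right _ _).trans ?_⟩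
    nlinarith [mul_le_mul_of_nonneg_right hφ (by linarith : (0 : ℝ) ≤ L)]

lemma chernoff_exponent_le {m N γ p l φ : ℝ} (hm : 0 < m) (hγ : 0 < γ) (hN : γ * m ≤ N)
    (hlφ : 0 ≤ l + φ) (hlφp : l + φ ≤ l * (p * γ)) :
    -(l * (p * N)) + l * m + (l + φ) * (m * log (N / m))
      ≤ -(m * (l * (p * γ - 1 - log γ) - φ * log γ)) := by
  have hN0 : 0 < N := by nlinarith
  have hlog : log (N / m) ≤ log γ + (N / (γ * m) - 1) := by
    rw [show N / m = γ * (N / (γ * m)) by field_simp, log_mul hγ.ne' (by positivity)]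
    gcongr
    exact log_le_sub_one_of_pos (by positivity)
  have hexcess : (l + φ) * m * (N / (γ * m) - 1) ≤ l * p * (N - γ * m) := by
    rw [show (l + φ) * m * (N / (γ * m) - 1) = (l + φ) / γ * (N - γ * m) by field_simp]
    gcongr
    rw [div_le_iff₀ hγ]; linarith
  nlinarith [mul_le_mul_of_nonneg_left hlog (by positivity : 0 ≤ (l + φ) * m)]

lemma sum_le_sum_range_card_of_antitone {f : ℕ → ℝ} (hf : Antitone f) (A : Finset ℕ) :
    ∑ j ∈ A, f j ≤ ∑ i ∈ range #A, f i := by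
  set e := A.orderEmbOfFin rfl
  conv_lhs => rw [← A.map_orderEmbOfFin_univ rfl, sum_map]
  rw [sum_range]
  refine sum_le_sum fun i _ => hf ?_
  -- the `i`-th smallest element of `A` is preceded by `i` smaller ones
  simpa using card_le_card_of_injOn e (s := Iio i) (t := Iio (e i))
    (fun a ha => by simpa using e.strictMono (mem_Iio.1 ha)) e.injective.injOn

noncomputable def zipfProb (m k : ℕ) : ℝ := min ((m : ℝ) / (k + 1)) 1

namespace zipfProb

lemma nonneg (m k : ℕ) : 0 ≤ zipfProb m k := le_min (by positivity) zero_le_one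

lemma le_one (m k : ℕ) : zipfProb m k ≤ 1 := min_le_right _ _

lemma antitone (m : ℕ) : Antitone (zipfProb m) := fun a b hab =>
  min_le_min_right _ (div_le_div_of_nonneg_left (by positivity) (by positivity) (by gcongr))

lemma eq_one_of_lt {m k : ℕ} (hk : k < m) : zipfProb m k = 1 :=
  min_eq_right ((one_le_div (by positivity)).2 (by exact_mod_cast hk))

lemma eq_div_of_le {m k : ℕ} (hk : m ≤ k) : zipfProb m k = m / (k + 1) :=
  min_eq_left ((div_le_one (by positivity)).2 (by norm_cast; omega))

end zipfProb

lemma sum_Ico_zipfProb_le {m N : ℕ} (hm : 0 < m) (hmN : m ≤ N) :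
    ∑ k ∈ Ico m N, zipfProb m k ≤ m * log (N / m) := calc
  ∑ k ∈ Ico m N, zipfProb m k = ∑ k ∈ Ico m N, (fun x : ℝ => m / x) ↑(k + 1) :=
    sum_congr rfl fun k hk => by rw [zipfProb.eq_div_of_le (mem_Ico.1 hk).1]; push_cast; rfl
  _ ≤ ∫ x in (m : ℝ)..N, m / x := by
    refine AntitoneOn.sum_le_integral_Ico hmN fun x hx y _ hxy => ?_
    have : (0 : ℝ) < m := by exact_mod_cast hm
    exact div_le_div_of_nonneg_left this.le (this.trans_le hx.1) hxy
  _ = m * log (N / m) := by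
    simp_rw [div_eq_mul_inv (m : ℝ)]
    rw [intervalIntegral.integral_const_mul, integral_inv]
    rw [Set.uIcc_of_le (by exact_mod_cast hmN)]
    simp only [Set.mem_Icc, Nat.cast_nonpos, not_and, not_le]
    omega

lemma antitone_zipfProb_gain (m : ℕ) {l φ : ℝ} (hφ0 : 0 ≤ φ) (hφl : φ ≤ l) :
    Antitone fun k => l * zipfProb m k + φ * (zipfProb m k * (1 - zipfProb m k)) := by
  intro a b hab
  -- `q ↦ l q + φ q (1 - q)` has slope `l + φ (1 - 2q) ≥ l - φ ≥ 0` on `[0, 1]`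
  have hslope : 0 ≤ l + φ * (1 - zipfProb m a - zipfProb m b) := by
    nlinarith [mul_nonneg hφ0 (by linarith [zipfProb.le_one m a, zipfProb.le_one m b] :
      (0 : ℝ) ≤ 2 - zipfProb m a - zipfProb m b)]
  nlinarith [mul_nonneg (sub_nonneg.2 (zipfProb.antitone m hab)) hslope]

lemma sum_range_zipfProb_gain_le {m N : ℕ} (hm : 0 < m) (hmN : m ≤ N) {l φ : ℝ} (hl : 0 ≤ l)
    (hφ : 0 ≤ φ) :
    ∑ k ∈ range N, (l * zipfProb m k + φ * (zipfProb m k * (1 - zipfProb m k)))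
      ≤ l * m + (l + φ) * (m * log (N / m)) := by
  rw [← sum_range_add_sum_Ico _ hmN]
  gcongr ?_ + ?_
  · rw [sum_congr rfl fun k hk => by rw [zipfProb.eq_one_of_lt (mem_range.1 hk)]]
    simp [mul_comm]
  · calc ∑ k ∈ Ico m N, (l * zipfProb m k + φ * (zipfProb m k * (1 - zipfProb m k)))
        ≤ ∑ k ∈ Ico m N, (l + φ) * zipfProb m k := by
          gcongr with k
          nlinarith [zipfProb.nonneg m k, mul_nonneg hφ (sq_nonneg (zipfProb m k))]
      _ ≤ (l + φ) * (m * log (N / m)) := by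
          rw [← mul_sum]; gcongr; exact sum_Ico_zipfProb_le hm hmN

instance (d m : ℕ) : IsProbabilityMeasure (zipfMeasure d m) := by
  unfold zipfMeasure; infer_instance

lemma mgf_zipfMeasure (d m : ℕ) (v : Fin d → ℝ) (l : ℝ) :
    mgf (fun ω => ∑ j, v j * (if ω j then (1 : ℝ) else 0)) (zipfMeasure d m) l
      = ∏ j : Fin d, (1 - zipfProb m j + zipfProb m j * exp (l * v j)) := by
  simp_rw [mgf, mul_sum, exp_sum]
  rw [zipfMeasure, integral_fintype_prod_eq_prod
    (fun j (b : Bool) => exp (l * (v j * if b then (1 : ℝ) else 0)))]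
  refine prod_congr rfl fun j _ => ?_
  rw [PMF.integral_eq_sum, Fintype.sum_bool, PMF.bernoulli_apply, PMF.bernoulli_apply]
  simp only [Bool.cond_true, Bool.cond_false, ENNReal.coe_toReal, smul_eq_mul,
    NNReal.coe_sub (min_le_right _ _), NNReal.coe_min, NNReal.coe_div, NNReal.coe_natCast,
    NNReal.coe_add, NNReal.coe_one, ↓reduceIte, mul_one, Bool.false_eq_true, mul_zero, exp_zero,
    zipfProb]
  ring

lemma zipfMeasure_real_sum_ge_le (d m : ℕ) (v : Fin d → ℝ) (c : ℝ) {l : ℝ} (hl : 0 ≤ l) :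
    (zipfMeasure d m).real {ω | c ≤ ∑ j, v j * (if ω j then (1 : ℝ) else 0)}
      ≤ exp (-l * c) * ∏ j : Fin d, (1 - zipfProb m j + zipfProb m j * exp (l * v j)) := by
  rw [← mgf_zipfMeasure]
  exact measure_ge_le_exp_mul_mgf c hl .of_finite

lemma zipfMeasure_sum_ge_le {d m : ℕ} (hm : 0 < m) {v : Fin d → ℝ} (hv : ∀ j, v j = 0 ∨ v j = 1)
    (hmN : (m : ℝ) ≤ ∑ j, v j) {l : ℝ} (hl : 0 ≤ l) (hφl : exp l - 1 - l ≤ l) (c : ℝ) :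
    zipfMeasure d m {ω | c ≤ ∑ j, v j * (if ω j then (1 : ℝ) else 0)}
      ≤ ENNReal.ofReal (exp (-(l * c) + l * m
          + (l + (exp l - 1 - l)) * (m * log ((∑ j, v j) / m)))) := by
  classical
  set φ := exp l - 1 - l
  set g : ℕ → ℝ := fun k => l * zipfProb m k + φ * (zipfProb m k * (1 - zipfProb m k))
  set A := univ.filter fun j => v j = 1
  have hvA : ∀ j, v j = if j ∈ A then 1 else 0 := fun j => by
    rcases hv j with h | h <;> simp [A, h]
  have hN : ∑ j, v j = #A := by simp [hvA]
  have hφ : 0 ≤ φ := by linarith [add_one_le_exp l]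
  have hfactor : ∀ j : Fin d, 1 - zipfProb m j + zipfProb m j * exp (l * v j) ≤ exp (v j * g j) :=
    fun j => by
      rcases hv j with h | h
      · simp [h]
      · simpa [h, g] using one_sub_add_mul_exp_le (zipfProb.nonneg m j) (zipfProb.le_one m j) hl
  have hprod : ∏ j : Fin d, (1 - zipfProb m j + zipfProb m j * exp (l * v j))
      ≤ exp (l * m + (l + φ) * (m * log (#A / m))) := calc
    _ ≤ ∏ j : Fin d, exp (v j * g j) := prod_le_prod (fun j _ => by
          nlinarith [zipfProb.nonneg m j, zipfProb.le_one m j, exp_pos (l * v j)])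
        fun j _ => hfactor j
    _ = exp (∑ k ∈ A.map Fin.valEmbedding, g k) := by
          rw [← exp_sum, sum_map]; simp [hvA]
    _ ≤ exp (∑ k ∈ range #A, g k) := by
          refine exp_le_exp.2 ?_
          simpa only [card_map] using sum_le_sum_range_card_of_antitone
            (antitone_zipfProb_gain m hφ hφl) (A.map Fin.valEmbedding)
    _ ≤ exp (l * m + (l + φ) * (m * log (#A / m))) := by
          gcongr
          exact sum_range_zipfProb_gain_le hm (by rw [hN] at hmN; exact_mod_cast hmN) hl hφ
  rw [← ofReal_measureReal, hN]
  refine ENNReal.ofReal_le_ofReal ((zipfMeasure_real_sum_ge_le d m v c hl).trans ?_)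
  rw [add_assoc, exp_add, neg_mul]
  gcongr

/-- precision reconstruction bound under the Zipfian prior. -/
theorem precision_bound (d m : ℕ) (hm : 1 ≤ m)
    (γ : ℝ) (hγ : 2 ≤ γ) (p : ℝ)
    (v : Fin d → ℝ) (hv : ∀ j, v j = 0 ∨ v j = 1)
    (hsum : γ * m ≤ ∑ j, v j) :
    zipfMeasure d m
        {ω | p ≤ (∑ j, v j * (if ω j then (1 : ℝ) else 0)) / (∑ j, v j)}
      ≤ ENNReal.ofReal (Real.exp (-(min
          ((max (p * γ - 1 - Real.log γ) 0) ^ 2 * m / (4 * Real.log γ))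
          (3 / 4 * (max (p * γ - 1 - Real.log γ) 0) * m)))) := by
  set L := log γ
  set t := p * γ - 1 - L
  rcases le_or_gt t 0 with ht | ht
  · rw [max_eq_right ht]
    simpa using prob_le_one
  rw [max_eq_left ht.le]
  have hL : 1 / 2 ≤ L := by linarith [log_two_gt_d9, log_le_log two_pos hγ]
  obtain ⟨l, hl, hφl, hφt, hgain⟩ := exists_chernoff_parameter hL ht
  have hm0 : (0 : ℝ) < m := by exact_mod_cast hm
  have hN : 0 < ∑ j, v j := by nlinarith
  have hevent : {ω : Fin d → Bool | p ≤ (∑ j, v j * (if ω j then (1 : ℝ) else 0)) / ∑ j, v j}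
      = {ω | p * ∑ j, v j ≤ ∑ j, v j * (if ω j then (1 : ℝ) else 0)} := by
    ext; simp [le_div_iff₀ hN]
  rw [hevent]
  refine (zipfMeasure_sum_ge_le hm hv (by nlinarith) hl hφl _).trans
    (ENNReal.ofReal_le_ofReal (exp_le_exp.2 ?_))
  calc _ ≤ -(m * (l * t - (exp l - 1 - l) * L)) :=
        chernoff_exponent_le hm0 (by linarith) hsum (by linarith [add_one_le_exp l])
          (by nlinarith [hφt, mul_nonneg hl (by linarith : 0 ≤ L)])
    _ ≤ _ := by
        rw [show t ^ 2 * m / (4 * L) = m * (t ^ 2 / (4 * L)) by ring,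
          show 3 / 4 * t * m = m * (3 / 4 * t) by ring, ← mul_min_of_nonneg _ _ hm0.le]
        exact neg_le_neg (mul_le_mul_of_nonneg_left hgain hm0.le)
end
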